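/- Let (X,T) be a topological dynamical system on a compact metric space and x ∈ X. If the proximal cell P[x] = {y : (x,y) is proximal} is the singleton {x}, then x is a minimal point, i.e., the orbit closure of x is a minimal subsystem. -/

import Mathlib

open Filter Topology

/-- The pair `(x, y)` is proximal: `liminf_{n→∞} ρ(Tⁿx, Tⁿy) = 0`. -/
def Proximal {X : Type*} [MetricSpace X] (T : X → X) (x y : X) : Prop :=
  Filter.atTop.liminf (fun n : ℕ => dist (T^[n] x) (T^[n] y)) = 0

/-!
Let `S` be the adherence semigroup of `T`: the cluster points in `X → X` (pointwise topology) of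
the iterates `Tⁿ` as `n → ∞`. It is a compact semigroup under composition, so every closed
subsemigroup of it contains an idempotent (Ellis–Numakura). An idempotent `u ∈ S` identifies `x`
and `u x`, hence `(x, u x)` is proximal and `u x = x`. Thus `x ∈ S x`, and since `S x` is closed
and invariant under `T` and `T⁻¹`, it contains the orbit closure of `x`. Given a closed invariant
`M`, write a point of `M` as `p x` with `p ∈ S` and take an idempotent `q ∘ p` of `S ∘ p`: it fixes
`x`, so `x = q (p x)` lies in `M`, and `M` contains the whole orbit closure.
-/

open Function Set

namespace Equiv.Perm

variable {X : Type*}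

theorem mapsTo_zpow {σ : Perm X} {M : Set X} (h : MapsTo σ M M) (h' : MapsTo ⇑σ⁻¹ M M) (n : ℤ) :
    MapsTo ⇑(σ ^ n) M M := by
  induction n using Int.induction_on with
  | zero => exact mapsTo_id M
  | succ n ih => rw [zpow_add_one, coe_mul]; exact ih.comp h
  | pred n ih => rw [zpow_sub_one, coe_mul]; exact ih.comp h'

theorem closure_zpow_orbit_subset [TopologicalSpace X] {σ : Perm X} {M : Set X} {x : X}
    (hM : IsClosed M) (hx : x ∈ M) (h : MapsTo σ M M) (h' : MapsTo ⇑σ⁻¹ M M) :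
    closure {y | ∃ n : ℤ, y = (σ ^ n) x} ⊆ M :=
  closure_minimal (by rintro _ ⟨n, rfl⟩; exact mapsTo_zpow h h' n hx) hM

end Equiv.Perm

section AdherenceSemigroup

variable {X : Type*} [TopologicalSpace X]

def adherenceSemigroup (T : X → X) : Set (X → X) :=
  {f | MapClusterPt f atTop fun n : ℕ => T^[n]}

variable {T : X → X}

theorem isClosed_adherenceSemigroup : IsClosed (adherenceSemigroup T) :=
  isClosed_setOfPred_clusterPt

theorem adherenceSemigroup_nonempty [CompactSpace X] : (adherenceSemigroup T).Nonempty :=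
  exists_clusterPt_of_compactSpace _

theorem mapClusterPt_iterate_add_iff {f : X → X} (k : ℕ) :
    MapClusterPt f atTop (fun n => T^[n + k]) ↔ f ∈ adherenceSemigroup T := by
  show MapClusterPt f atTop ((fun n => T^[n]) ∘ (· + k)) ↔ _
  rw [mapClusterPt_comp, map_add_atTop_eq_nat]
  rfl

theorem comp_mem_adherenceSemigroup_of_comp_iterate {g : X → X} (hg : Continuous g) {k l : ℕ}
    (hgT : ∀ n, g ∘ T^[n + k] = T^[n + l]) {f : X → X} (hf : f ∈ adherenceSemigroup T) :
    g ∘ f ∈ adherenceSemigroup T := by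
  rw [← mapClusterPt_iterate_add_iff k] at hf
  rw [← mapClusterPt_iterate_add_iff l]
  have hcomp : Continuous fun f : X → X => g ∘ f :=
    continuous_pi fun x => hg.comp (continuous_apply x)
  have h : MapClusterPt (g ∘ f) atTop fun n => g ∘ T^[n + k] :=
    hf.continuousAt_comp (f := (g ∘ ·)) hcomp.continuousAt
  simpa only [hgT] using h

theorem iterate_comp_mem_adherenceSemigroup (hT : Continuous T) (m : ℕ) {f : X → X}
    (hf : f ∈ adherenceSemigroup T) : T^[m] ∘ f ∈ adherenceSemigroup T :=
  comp_mem_adherenceSemigroup_of_comp_iterate (hT.iterate m) (k := 0) (l := m)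
    (fun n => by rw [add_zero, ← iterate_add, add_comm]) hf

theorem comp_mem_adherenceSemigroup (hT : Continuous T) {f g : X → X}
    (hf : f ∈ adherenceSemigroup T) (hg : g ∈ adherenceSemigroup T) :
    f ∘ g ∈ adherenceSemigroup T := by
  have hcomp : Continuous fun h : X → X => h ∘ g := continuous_pi fun x => continuous_apply (g x)
  exact isClosed_adherenceSemigroup.mem_of_mapClusterPt
    (hf.continuousAt_comp (f := (· ∘ g)) hcomp.continuousAt)
    (Eventually.of_forall fun m => iterate_comp_mem_adherenceSemigroup hT m hg)

theorem apply_mem_of_mem_adherenceSemigroup {f : X → X} (hf : f ∈ adherenceSemigroup T)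
    {M : Set X} (hM : IsClosed M) (hTM : MapsTo T M M) {z : X} (hz : z ∈ M) : f z ∈ M :=
  hM.mem_of_mapClusterPt
    (hf.continuousAt_comp (f := fun h => h z) (continuous_apply z).continuousAt)
    (Eventually.of_forall fun n => hTM.iterate n hz)

theorem exists_comp_self_eq_of_isCompact [T2Space X] {K : Set (X → X)} (hne : K.Nonempty)
    (hK : IsCompact K) (hmul : ∀ f ∈ K, ∀ g ∈ K, f ∘ g ∈ K) : ∃ u ∈ K, u ∘ u = u := by
  let _ : Semigroup (X → X) := { mul := (· ∘ ·), mul_assoc := fun _ _ _ => rfl }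
  exact exists_idempotent_in_compact_subsemigroup
    (fun g => continuous_pi fun x => continuous_apply (g x)) K hne hK hmul

theorem exists_mem_adherenceSemigroup_comp_idempotent [CompactSpace X] [T2Space X]
    (hT : Continuous T) {p : X → X} (hp : p ∈ adherenceSemigroup T) :
    ∃ q ∈ adherenceSemigroup T, (q ∘ p) ∘ (q ∘ p) = q ∘ p := by
  have hmul : ∀ f ∈ (· ∘ p) '' adherenceSemigroup T, ∀ g ∈ (· ∘ p) '' adherenceSemigroup T,
      f ∘ g ∈ (· ∘ p) '' adherenceSemigroup T := by
    rintro _ ⟨q₁, hq₁, rfl⟩ _ ⟨q₂, hq₂, rfl⟩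
    exact ⟨q₁ ∘ p ∘ q₂,
      comp_mem_adherenceSemigroup hT hq₁ (comp_mem_adherenceSemigroup hT hp hq₂), rfl⟩
  obtain ⟨_, ⟨q, hq, rfl⟩, hqq⟩ := exists_comp_self_eq_of_isCompact
    (adherenceSemigroup_nonempty.image _)
    (isClosed_adherenceSemigroup.isCompact.image (continuous_pi fun x => continuous_apply (p x)))
    hmul
  exact ⟨q, hq, hqq⟩

theorem closure_zpow_orbit_subset_image_adherenceSemigroup [CompactSpace X] [T2Space X]
    (T : X ≃ₜ X) {x : X} (hx : x ∈ (fun f => f x) '' adherenceSemigroup T) :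
    closure {y | ∃ n : ℤ, y = (T.toEquiv ^ n) x} ⊆ (fun f => f x) '' adherenceSemigroup T := by
  have hS : IsClosed ((fun f => f x) '' adherenceSemigroup T) :=
    (isClosed_adherenceSemigroup.isCompact.image (continuous_apply x)).isClosed
  refine Equiv.Perm.closure_zpow_orbit_subset hS hx ?_ ?_
  · rintro _ ⟨f, hf, rfl⟩
    exact ⟨T ∘ f, iterate_comp_mem_adherenceSemigroup T.continuous 1 hf, rfl⟩
  · rintro _ ⟨f, hf, rfl⟩
    refine ⟨T.symm ∘ f, comp_mem_adherenceSemigroup_of_comp_iterate T.symm.continuous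
      (k := 1) (l := 0) (fun n => ?_) hf, rfl⟩
    rw [iterate_succ', ← comp_assoc, T.symm_comp_self, id_comp]
    rfl

end AdherenceSemigroup

theorem proximal_of_mem_adherenceSemigroup {X : Type*} [MetricSpace X] {T f : X → X}
    (hf : f ∈ adherenceSemigroup T) {x y : X} (hxy : f x = f y) : Proximal T x y := by
  have hdist : Continuous fun g : X → X => dist (g x) (g y) :=
    (continuous_apply x).dist (continuous_apply y)
  have h0 : MapClusterPt 0 atTop fun n => dist (T^[n] x) (T^[n] y) := by
    have h := hf.continuousAt_comp (f := fun g => dist (g x) (g y)) hdist.continuousAt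
    rwa [hxy, dist_self] at h
  have hnonneg : ∀ᶠ n in atTop, 0 ≤ dist (T^[n] x) (T^[n] y) :=
    Eventually.of_forall fun _ => dist_nonneg
  have hsmall : ∃ᶠ n in atTop, dist (T^[n] x) (T^[n] y) ≤ 1 :=
    (h0.frequently (gt_mem_nhds one_pos)).mono fun _ => le_of_lt
  exact le_antisymm (h0.liminf_le ⟨0, hnonneg⟩)
    (le_liminf_of_le (.of_frequently_le hsmall) hnonneg)

/-- If the proximal cell of `x` is the singleton `{x}`, then `x` is a minimal point:
the closure of its full orbit `{Tⁿx : n ∈ ℤ}` is a minimal subsystem, i.e. it has no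
proper nonempty closed invariant subset. -/
theorem minimal_point_of_proximal_cell_singleton {X : Type*} [MetricSpace X] [CompactSpace X]
    (T : X ≃ₜ X) (x : X)
    (hP : {y : X | Proximal ⇑T x y} = {x}) :
    ∀ M : Set X, M ⊆ closure {y : X | ∃ n : ℤ, y = (T.toEquiv ^ n) x} →
      M.Nonempty → IsClosed M → (∀ z ∈ M, T z ∈ M ∧ T.symm z ∈ M) →
      M = closure {y : X | ∃ n : ℤ, y = (T.toEquiv ^ n) x} := by
  intro M hMsub ⟨z, hzM⟩ hMcl hMinv
  have hTM : MapsTo T M M := fun z hz => (hMinv z hz).1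
  have hfix : ∀ u ∈ adherenceSemigroup T, u ∘ u = u → u x = x := fun u hu huu =>
    hP.subset (proximal_of_mem_adherenceSemigroup hu (congrFun huu x).symm)
  obtain ⟨u, hu, huu⟩ : ∃ u ∈ adherenceSemigroup T, u ∘ u = u := by
    obtain ⟨p, hp⟩ := adherenceSemigroup_nonempty (T := T)
    obtain ⟨q, hq, hqp⟩ := exists_mem_adherenceSemigroup_comp_idempotent T.continuous hp
    exact ⟨q ∘ p, comp_mem_adherenceSemigroup T.continuous hq hp, hqp⟩
  obtain ⟨p, hp, rfl⟩ :=
    closure_zpow_orbit_subset_image_adherenceSemigroup T ⟨u, hu, hfix u hu huu⟩ (hMsub hzM)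
  obtain ⟨q, hq, hqp⟩ := exists_mem_adherenceSemigroup_comp_idempotent T.continuous hp
  have hxM : x ∈ M :=
    hfix _ (comp_mem_adherenceSemigroup T.continuous hq hp) hqp ▸
      apply_mem_of_mem_adherenceSemigroup hq hMcl hTM hzM
  exact hMsub.antisymm <|
    Equiv.Perm.closure_zpow_orbit_subset hMcl hxM hTM fun z hz => (hMinv z hz).2
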